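/- arXiv:1612.08575 — 3 statements merged into one kernel-verified Lean document; each statement's English description precedes it below -/
import Mathlib

section
/- Let z be a complex number and n a natural number with n ≥ 10(|z|+1). Then |e^z − Σ_{j=0}^{n} z^j/j!| ≤ e^{−n}. -/
/-!
Mathlib's `Complex.exp_bound'` bounds the tail of the exponential series after the
terms of degree `≤ n` by twice its first term `‖z‖ ^ (n + 1) / (n + 1)!`, as soon as
`‖z‖ ≤ (n + 2) / 2`. Since `‖z‖ ≤ (n + 1) / 10` and `k ^ k / k! ≤ e ^ k`, that first term is
at most `(e / 10) ^ (n + 1)`, and `e ^ 2 ≤ 10` turns `2 (e / 10) ^ (n + 1)` into `e ^ (-n)`.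
-/

open Real Nat

lemma pow_div_factorial_le_of_le_mul {x c : ℝ} {k : ℕ} (hx : 0 ≤ x) (hc : 0 ≤ c)
    (h : x ≤ c * k) : x ^ k / k ! ≤ (c * exp 1) ^ k :=
  calc x ^ k / k ! ≤ (c * k) ^ k / k ! := by gcongr
    _ = c ^ k * ((k : ℝ) ^ k / k !) := by ring
    _ ≤ c ^ k * exp k := by gcongr; exact pow_div_factorial_le_exp _ k.cast_nonneg k
    _ = (c * exp 1) ^ k := by rw [mul_pow, ← exp_nat_mul, mul_one]

lemma two_mul_exp_one_div_ten_pow_succ_le (k : ℕ) :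
    2 * (exp 1 / 10) ^ (k + 1) ≤ exp (-k) := by
  have he := exp_one_lt_d9
  have he_pos := exp_pos 1
  have h_ratio : exp 1 / 10 ≤ (exp 1)⁻¹ := by
    rw [div_le_iff₀ (by norm_num), inv_mul_eq_div, le_div_iff₀ he_pos]
    nlinarith
  calc 2 * (exp 1 / 10) ^ (k + 1) = (2 * exp 1 / 10) * (exp 1 / 10) ^ k := by ring
    _ ≤ 1 * (exp 1)⁻¹ ^ k := by gcongr; linarith
    _ = exp (-k) := by rw [one_mul, ← exp_neg, ← exp_nat_mul]; ring_nf

theorem stmt_1 (z : ℂ) (n : ℕ) (hn : (10 : ℝ) * (‖z‖ + 1) ≤ n) :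
    ‖Complex.exp z - ∑ j ∈ Finset.range (n + 1), z ^ j / (Nat.factorial j : ℂ)‖
      ≤ Real.exp (-(n : ℝ)) := by
  have hz : ‖z‖ ≤ 1 / 10 * ((n + 1 : ℕ) : ℝ) := by push_cast; linarith
  have h_tail := Complex.exp_bound' (x := z) (n := n + 1) <| by
    rw [div_le_iff₀ (by positivity)]
    push_cast at hz ⊢
    linarith
  calc _ ≤ ‖z‖ ^ (n + 1) / (n + 1)! * 2 := h_tail
    _ ≤ (1 / 10 * exp 1) ^ (n + 1) * 2 := by
      gcongr
      exact pow_div_factorial_le_of_le_mul (norm_nonneg z) (by norm_num) hz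
    _ = 2 * (exp 1 / 10) ^ (n + 1) := by ring
    _ ≤ exp (-n) := two_mul_exp_one_div_ten_pow_succ_le n
end

section
/- For real numbers x and c with c > 0, the contour integral (1/(2πi)) ∫_{c−i∞}^{c+i∞} e^{xw}/w² dw equals x if x ≥ 0 and equals 0 if x ≤ 0. Equivalently, (1/(2π)) ∫_{−∞}^{∞} e^{x(c+it)}/(c+it)² dt = max(x,0). -/
/-!
For `0 < re a`, the function `ξ ↦ (a + 2πiξ)⁻²` is the Fourier transform of the continuous
integrable function `s ↦ s₊ e^{-as}`: a Laplace integral, computed from an explicit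
antiderivative. It is integrable on `ℝ`, so Fourier inversion at `x` gives, after the
substitution `t = 2πξ`, `∫ e^{ixt} (a + it)⁻² dt = 2π x₊ e^{-ax}`; multiplying by `e^{ax}`
gives the theorem.
-/

open MeasureTheory Complex Set Filter Topology
open scoped FourierTransform Real

variable {a : ℂ}

lemma norm_ofReal_pow_mul_cexp_neg_mul {s : ℝ} (hs : 0 ≤ s) (n : ℕ) :
    ‖(s : ℂ) ^ n * cexp (-(a * s))‖ = s ^ n * Real.exp (-a.re * s) := by
  rw [norm_mul, norm_pow, norm_real, Real.norm_of_nonneg hs, norm_exp]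
  simp

lemma integrableOn_Ioi_ofReal_mul_cexp_neg_mul (ha : 0 < a.re) :
    IntegrableOn (fun s : ℝ ↦ (s : ℂ) * cexp (-(a * s))) (Ioi 0) := by
  have hreal := integrableOn_rpow_mul_exp_neg_mul_rpow (s := 1) (p := 1) (by norm_num)
    one_pos ha
  simp only [Real.rpow_one] at hreal
  refine hreal.mono' (by fun_prop) ?_
  filter_upwards [ae_restrict_mem measurableSet_Ioi] with s hs
  simpa using (norm_ofReal_pow_mul_cexp_neg_mul (a := a) hs.le 1).le

lemma tendsto_ofReal_pow_mul_cexp_neg_mul_atTop (ha : 0 < a.re) (n : ℕ) :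
    Tendsto (fun s : ℝ ↦ (s : ℂ) ^ n * cexp (-(a * s))) atTop (𝓝 0) := by
  rw [tendsto_zero_iff_norm_tendsto_zero]
  refine (tendsto_rpow_mul_exp_neg_mul_atTop_nhds_zero n a.re ha).congr' ?_
  filter_upwards [eventually_ge_atTop 0] with s hs
  rw [norm_ofReal_pow_mul_cexp_neg_mul hs, Real.rpow_natCast]

lemma integral_Ioi_ofReal_mul_cexp_neg_mul (ha : 0 < a.re) :
    ∫ s : ℝ in Ioi 0, (s : ℂ) * cexp (-(a * s)) = (a⁻¹) ^ 2 := by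
  have ha0 : a ≠ 0 := fun h ↦ by simp [h] at ha
  set F : ℝ → ℂ := fun s ↦ -(a⁻¹ * s + a⁻¹ ^ 2) * cexp (-(a * s))
  have hF : ∀ s ∈ Ici (0 : ℝ), HasDerivAt F ((s : ℂ) * cexp (-(a * s))) s := by
    intro s _
    have hs : HasDerivAt (fun s : ℝ ↦ (s : ℂ)) 1 s := ofRealCLM.hasDerivAt
    refine (((hs.const_mul a⁻¹).add_const (a⁻¹ ^ 2)).neg.mul
      (hs.const_mul a).neg.cexp).congr_deriv ?_
    simp only [Pi.neg_apply]
    field_simp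
    ring
  have hlim : Tendsto F atTop (𝓝 0) := by
    have := (((tendsto_ofReal_pow_mul_cexp_neg_mul_atTop ha 1).const_mul a⁻¹).add
      ((tendsto_ofReal_pow_mul_cexp_neg_mul_atTop ha 0).const_mul (a⁻¹ ^ 2))).neg
    simp only [pow_one, pow_zero, one_mul, neg_zero, mul_zero, add_zero] at this
    refine this.congr fun s ↦ ?_
    simp only [F]
    ring
  rw [integral_Ioi_of_hasDerivAt_of_tendsto' hF
    (integrableOn_Ioi_ofReal_mul_cexp_neg_mul ha) hlim]
  simp [F]

lemma integrable_inv_sq_add_sq {r : ℝ} (hr : r ≠ 0) :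
    Integrable fun t : ℝ ↦ (r ^ 2 + t ^ 2)⁻¹ := by
  refine ((integrable_inv_one_add_sq.comp_div hr).const_mul (r ^ 2)⁻¹).congr
    (Eventually.of_forall fun t ↦ ?_)
  dsimp only
  field_simp

lemma integrable_inv_add_mul_I_sq (ha : 0 < a.re) :
    Integrable fun t : ℝ ↦ ((a + t * I)⁻¹) ^ 2 := by
  refine ((integrable_inv_sq_add_sq ha.ne').comp_add_right a.im).mono' (by fun_prop)
    (Eventually.of_forall fun t ↦ le_of_eq ?_)
  rw [norm_pow, norm_inv, inv_pow, ← normSq_eq_norm_sq, normSq_apply]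
  simp only [add_re, add_im, re_ofReal_mul, im_ofReal_mul, I_re, I_im, mul_zero, mul_one, add_zero]
  ring

noncomputable def rampExp (a : ℂ) (s : ℝ) : ℂ := ((max s 0 : ℝ) : ℂ) * cexp (-(a * s))

lemma rampExp_eq_indicator (a : ℂ) :
    rampExp a = (Ioi 0).indicator fun s : ℝ ↦ (s : ℂ) * cexp (-(a * s)) := by
  ext s
  rcases lt_or_ge 0 s with hs | hs
  · simp [rampExp, hs, hs.le]
  · simp [rampExp, hs]

lemma continuous_rampExp (a : ℂ) : Continuous (rampExp a) := by
  unfold rampExp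
  fun_prop

lemma integrable_rampExp (ha : 0 < a.re) : Integrable (rampExp a) := by
  rw [rampExp_eq_indicator, integrable_indicator_iff measurableSet_Ioi]
  exact integrableOn_Ioi_ofReal_mul_cexp_neg_mul ha

lemma fourier_rampExp (ha : 0 < a.re) (ξ : ℝ) :
    𝓕 (rampExp a) ξ = ((a + ↑(2 * π * ξ) * I)⁻¹) ^ 2 := calc
  𝓕 (rampExp a) ξ = ∫ s : ℝ in Ioi 0,
      cexp (↑(-2 * π * s * ξ) * I) • ((s : ℂ) * cexp (-(a * s))) := by
    rw [Real.fourier_real_eq_integral_exp_smul, ← integral_indicator measurableSet_Ioi,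
      rampExp_eq_indicator]
    simp_rw [indicator_smul_apply]
  _ = ∫ s : ℝ in Ioi 0, (s : ℂ) * cexp (-((a + ↑(2 * π * ξ) * I) * s)) := by
    refine setIntegral_congr_fun measurableSet_Ioi fun s _ ↦ ?_
    rw [smul_eq_mul, mul_left_comm, ← Complex.exp_add]
    push_cast
    ring_nf
  _ = _ := integral_Ioi_ofReal_mul_cexp_neg_mul (by simpa using ha)

lemma integrable_fourier_rampExp (ha : 0 < a.re) : Integrable (𝓕 (rampExp a)) := by
  simp_rw [funext (fourier_rampExp ha)]
  exact (integrable_inv_add_mul_I_sq ha).comp_mul_left' (by positivity)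

theorem integral_cexp_mul_div_sq (ha : 0 < a.re) (x : ℝ) :
    ∫ t : ℝ, cexp (x * (a + t * I)) / (a + t * I) ^ 2 = 2 * π * max x 0 := by
  set G : ℝ → ℂ := fun t ↦ cexp (x * t * I) * ((a + t * I)⁻¹) ^ 2
  have hinv : ∫ ξ, G (2 * π * ξ) = rampExp a x := by
    rw [← (integrable_rampExp ha).fourierInv_fourier_eq (integrable_fourier_rampExp ha)
      (continuous_rampExp a).continuousAt, Real.fourierInv_eq']
    congr with ξ
    simp only [G, fourier_rampExp ha, smul_eq_mul, RCLike.inner_apply, conj_trivial]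
    push_cast
    ring_nf
  have hG : ∫ t, G t = 2 * π * rampExp a x := by
    rw [← hinv, Measure.integral_comp_mul_left G (2 * π), abs_of_pos (by positivity),
      real_smul]
    push_cast
    field_simp
  calc ∫ t : ℝ, cexp (x * (a + t * I)) / (a + t * I) ^ 2 = cexp (x * a) * ∫ t, G t := by
        rw [← integral_const_mul]
        congr with t
        simp only [G, mul_add, Complex.exp_add, inv_pow, mul_assoc]
        ring
    _ = 2 * π * max x 0 := by
        have hexp : cexp (x * a) * cexp (-(a * x)) = 1 := by
          rw [← Complex.exp_add, mul_comm, add_neg_cancel, Complex.exp_zero]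
        rw [hG, rampExp]
        linear_combination (2 * π * max x 0 : ℂ) * hexp

theorem stmt_4 (x c : ℝ) (hc : 0 < c) :
    ((2 * Real.pi : ℝ) : ℂ)⁻¹ *
        ∫ t : ℝ, Complex.exp ((x : ℂ) * ((c : ℂ) + (t : ℂ) * Complex.I)) /
          ((c : ℂ) + (t : ℂ) * Complex.I) ^ 2
      = ((max x 0 : ℝ) : ℂ) := by
  rw [integral_cexp_mul_div_sq (by simpa using hc)]
  push_cast
  field_simp
end

section
/- Let N ≤ T be positive reals and a(n), b(n) complex numbers for natural numbers n ≤ N. Then ∫_T^{2T} (Σ_{m≤N} a(m) m^{−it})(Σ_{n≤N} b(n) n^{it}) dt = T·Σ_{n≤N} a(n)b(n) + O(N log N · Σ_{n≤N}(|a(n)|² + |b(n)|²)), with an absolute implied constant. -/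
/-!
Expanding the product, the integrand is `∑ m, ∑ n, a m * b n * exp (i t log (n / m))`. The
diagonal terms integrate to `T * a n * b n`; an off-diagonal term is at most
`2 |a m| |b n| / |log (n / m)| ≤ (|a m|² + |b n|²) / |log (n / m)|`. Since
`|log n - log m| ≥ |n - m| / N` for `m, n ≤ N`, comparison with the harmonic series gives
`∑_{n ≠ m} 1 / |log (n / m)| ≤ 2 N (1 + log N) ≪ N log N` uniformly in `m`.
-/

open MeasureTheory Complex

open Finset

lemma abs_sub_div_le_abs_log_sub {x y K : ℝ} (hx : 0 < x) (hy : 0 < y) (hxK : x ≤ K)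
    (hyK : y ≤ K) : |x - y| / K ≤ |Real.log x - Real.log y| := by
  wlog hyx : y ≤ x generalizing x y
  · rw [abs_sub_comm, abs_sub_comm (Real.log x)]
    exact this hy hx hyK hxK (le_of_not_ge hyx)
  rw [abs_of_nonneg (sub_nonneg.2 hyx), abs_of_nonneg (sub_nonneg.2 (Real.log_le_log hy hyx)),
    ← Real.log_div hx.ne' hy.ne']
  calc (x - y) / K ≤ (x - y) / x := div_le_div_of_nonneg_left (sub_nonneg.2 hyx) hx hxK
    _ = 1 - (x / y)⁻¹ := by field_simp
    _ ≤ Real.log (x / y) := Real.one_sub_inv_le_log_of_pos (div_pos hx hy)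

lemma sum_inv_le_harmonic_of_injOn {α : Type*} {s : Finset α} {e : α → ℕ} {K : ℕ}
    (he : Set.InjOn e s) (hmaps : ∀ x ∈ s, e x ∈ Icc 1 K) :
    ∑ x ∈ s, ((e x : ℝ))⁻¹ ≤ harmonic K := by
  classical
  calc ∑ x ∈ s, ((e x : ℝ))⁻¹ = ∑ d ∈ s.image e, (d : ℝ)⁻¹ :=
        (sum_image (f := fun d : ℕ ↦ (d : ℝ)⁻¹) he).symm
    _ ≤ ∑ d ∈ Icc 1 K, (d : ℝ)⁻¹ :=
      sum_le_sum_of_subset_of_nonneg (image_subset_iff.2 hmaps) fun _ _ _ ↦ by positivity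
    _ = harmonic K := by rw [harmonic_eq_sum_Icc]; push_cast; rfl

lemma sum_erase_inv_abs_sub_le {K m : ℕ} (hm : m ≤ K) :
    ∑ n ∈ (Icc 1 K).erase m, |(n : ℝ) - m|⁻¹ ≤ 2 * harmonic K := by
  rw [← sum_filter_add_sum_filter_not _ (· < m), two_mul]
  gcongr
  · calc _ = ∑ n ∈ ((Icc 1 K).erase m).filter (· < m), (((m - n : ℕ) : ℝ))⁻¹ := by
          refine sum_congr rfl fun n hn ↦ ?_
          rw [mem_filter] at hn
          rw [abs_sub_comm, Nat.cast_sub hn.2.le, abs_of_pos (by simpa using hn.2)]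
      _ ≤ harmonic K := sum_inv_le_harmonic_of_injOn
          (fun x hx y hy h ↦ by
            simp only [coe_filter, mem_erase, mem_Icc, Set.mem_ofPred] at hx hy; omega)
          (fun n hn ↦ by simp only [mem_filter, mem_erase, mem_Icc] at hn ⊢; omega)
  · calc _ = ∑ n ∈ ((Icc 1 K).erase m).filter (¬ · < m), (((n - m : ℕ) : ℝ))⁻¹ := by
          refine sum_congr rfl fun n hn ↦ ?_
          simp only [mem_filter, mem_erase, not_lt] at hn
          rw [Nat.cast_sub hn.2, abs_of_pos (by simpa using lt_of_le_of_ne hn.2 hn.1.1.symm)]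
      _ ≤ harmonic K := sum_inv_le_harmonic_of_injOn
          (fun x hx y hy h ↦ by
            simp only [coe_filter, mem_erase, mem_Icc, Set.mem_ofPred] at hx hy; omega)
          (fun n hn ↦ by simp only [mem_filter, mem_erase, mem_Icc] at hn ⊢; omega)

lemma sum_erase_inv_abs_log_sub_le {K m : ℕ} {N : ℝ} (hm : m ∈ Icc 1 K) (hKN : (K : ℝ) ≤ N) :
    ∑ n ∈ (Icc 1 K).erase m, |Real.log n - Real.log m|⁻¹ ≤ 5 * (N * Real.log N) := by
  obtain ⟨hm1, hmK⟩ := mem_Icc.1 hm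
  have hN : 1 ≤ N := le_trans (by exact_mod_cast hm1.trans hmK) hKN
  rcases (hm1.trans hmK).eq_or_lt with rfl | hK
  · obtain rfl : m = 1 := le_antisymm hmK hm1
    simp only [Icc_self, erase_singleton, sum_empty]
    have := Real.log_nonneg hN
    positivity
  have hterm : ∀ n ∈ (Icc 1 K).erase m, |Real.log n - Real.log m|⁻¹ ≤ K * |(n : ℝ) - m|⁻¹ := by
    intro n hn
    obtain ⟨hnm, hn⟩ := mem_erase.1 hn
    obtain ⟨hn1, hnK⟩ := mem_Icc.1 hn
    have hgap : 0 < |(n : ℝ) - m| := abs_pos.2 (sub_ne_zero.2 (by exact_mod_cast hnm))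
    calc |Real.log n - Real.log m|⁻¹ ≤ (|(n : ℝ) - m| / K)⁻¹ :=
          inv_anti₀ (by positivity) (abs_sub_div_le_abs_log_sub (by positivity) (by positivity)
            (by exact_mod_cast hnK) (by exact_mod_cast hmK))
      _ = K * |(n : ℝ) - m|⁻¹ := by rw [inv_div, div_eq_mul_inv]
  have hlogK : Real.log 2 ≤ Real.log K := Real.log_le_log two_pos (by exact_mod_cast hK)
  calc ∑ n ∈ (Icc 1 K).erase m, |Real.log n - Real.log m|⁻¹
      ≤ K * ∑ n ∈ (Icc 1 K).erase m, |(n : ℝ) - m|⁻¹ := by rw [mul_sum]; exact sum_le_sum hterm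
    _ ≤ K * (2 * (1 + Real.log K)) := by
      gcongr
      exact (sum_erase_inv_abs_sub_le hmK).trans
        (by gcongr; exact_mod_cast harmonic_le_one_add_log K)
    _ ≤ 5 * (K * Real.log K) := by nlinarith [Real.log_two_gt_d9]
    _ ≤ 5 * (N * Real.log N) := by gcongr

lemma sum_sum_erase_mul_le_of_symm {ι : Type*} [DecidableEq ι] (s : Finset ι) {w : ι → ι → ℝ}
    (hw0 : ∀ m n, 0 ≤ w m n) (hw : ∀ m n, w m n = w n m) {B : ℝ}
    (hB : ∀ m ∈ s, ∑ n ∈ s.erase m, w m n ≤ B) (x y : ι → ℝ) :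
    ∑ m ∈ s, ∑ n ∈ s.erase m, 2 * x m * y n * w m n ≤ B * ∑ n ∈ s, (x n ^ 2 + y n ^ 2) := by
  have hswap : ∑ m ∈ s, ∑ n ∈ s.erase m, y n ^ 2 * w n m
      = ∑ n ∈ s, ∑ m ∈ s.erase n, y n ^ 2 * w n m :=
    sum_comm' fun m n ↦ by simp only [mem_erase]; tauto
  calc ∑ m ∈ s, ∑ n ∈ s.erase m, 2 * x m * y n * w m n
      ≤ ∑ m ∈ s, ∑ n ∈ s.erase m, (x m ^ 2 * w m n + y n ^ 2 * w n m) := by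
        gcongr with m _ n _
        rw [← hw m n]
        nlinarith [mul_nonneg (sq_nonneg (x m - y n)) (hw0 m n)]
    _ = ∑ m ∈ s, x m ^ 2 * ∑ n ∈ s.erase m, w m n
          + ∑ n ∈ s, y n ^ 2 * ∑ m ∈ s.erase n, w n m := by
        simp_rw [sum_add_distrib, mul_sum, hswap]
    _ ≤ ∑ m ∈ s, x m ^ 2 * B + ∑ n ∈ s, y n ^ 2 * B := by
        gcongr with m hm n hn
        · exact hB m hm
        · exact hB n hn
    _ = B * ∑ n ∈ s, (x n ^ 2 + y n ^ 2) := by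
        rw [← sum_add_distrib, mul_sum]; simp_rw [mul_add, mul_comm B]

lemma ofReal_cpow_neg_mul_I_mul_ofReal_cpow_mul_I {x y : ℝ} (hx : 0 < x) (hy : 0 < y) (t : ℝ) :
    (x : ℂ) ^ (-((t : ℂ) * I)) * (y : ℂ) ^ ((t : ℂ) * I)
      = cexp (I * ((Real.log y - Real.log x : ℝ) : ℂ) * t) := by
  rw [cpow_def_of_ne_zero (by exact_mod_cast hx.ne'),
    cpow_def_of_ne_zero (by exact_mod_cast hy.ne'), ← Complex.exp_add, ← ofReal_log hx.le,
    ← ofReal_log hy.le]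
  push_cast
  ring_nf

lemma norm_integral_exp_I_mul_le (a b : ℝ) {L : ℝ} (hL : L ≠ 0) :
    ‖∫ t in a..b, cexp (I * L * t)‖ ≤ 2 * |L|⁻¹ := by
  have hIL : I * L ≠ 0 := mul_ne_zero I_ne_zero (ofReal_ne_zero.2 hL)
  have hnorm : ∀ s : ℝ, ‖cexp (I * L * s)‖ = 1 := fun s ↦ by simp [norm_exp]
  rw [integral_exp_mul_complex hIL, norm_div, div_eq_mul_inv, norm_mul, norm_I, one_mul,
    norm_real, Real.norm_eq_abs]
  gcongr
  calc _ ≤ ‖cexp (I * L * b)‖ + ‖cexp (I * L * a)‖ := norm_sub_le _ _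
    _ = 2 := by rw [hnorm, hnorm]; norm_num

lemma integral_dirichletPoly_mul (s : Finset ℕ) (hs : ∀ n ∈ s, n ≠ 0) (a b : ℕ → ℂ)
    (T₁ T₂ : ℝ) :
    ∫ t in T₁..T₂, (∑ m ∈ s, a m * (m : ℂ) ^ (-((t : ℂ) * I))) *
        (∑ n ∈ s, b n * (n : ℂ) ^ ((t : ℂ) * I))
      = ∑ m ∈ s, ∑ n ∈ s, a m * b n *
          ∫ t in T₁..T₂, cexp (I * ((Real.log n - Real.log m : ℝ) : ℂ) * t) := by
  have hexpand : ∀ t : ℝ, (∑ m ∈ s, a m * (m : ℂ) ^ (-((t : ℂ) * I))) *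
        (∑ n ∈ s, b n * (n : ℂ) ^ ((t : ℂ) * I))
      = ∑ m ∈ s, ∑ n ∈ s, a m * b n * cexp (I * ((Real.log n - Real.log m : ℝ) : ℂ) * t) := by
    intro t
    rw [sum_mul_sum]
    refine sum_congr rfl fun m hm ↦ sum_congr rfl fun n hn ↦ ?_
    have hpos : ∀ k ∈ s, (0 : ℝ) < k := fun k hk ↦ Nat.cast_pos.2 (Nat.pos_of_ne_zero (hs k hk))
    rw [← ofReal_cpow_neg_mul_I_mul_ofReal_cpow_mul_I (hpos m hm) (hpos n hn)]
    push_cast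
    ring
  have hint : ∀ (c : ℂ) (L : ℝ),
      IntervalIntegrable (fun t : ℝ ↦ c * cexp (I * L * t)) volume T₁ T₂ :=
    fun c L ↦ (by fun_prop : Continuous _).intervalIntegrable _ _
  simp_rw [hexpand]
  rw [intervalIntegral.integral_finsetSum fun m _ ↦ ?_]
  · refine sum_congr rfl fun m _ ↦ ?_
    rw [intervalIntegral.integral_finsetSum fun n _ ↦ hint _ _]
    simp_rw [intervalIntegral.integral_const_mul]
  · exact (continuous_finsetSum _ fun n _ ↦ by fun_prop).intervalIntegrable _ _

lemma integral_dirichletPoly_mul_sub_eq (s : Finset ℕ) (hs : ∀ n ∈ s, n ≠ 0) (a b : ℕ → ℂ)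
    (T₁ T₂ : ℝ) :
    (∫ t in T₁..T₂, (∑ m ∈ s, a m * (m : ℂ) ^ (-((t : ℂ) * I))) *
        (∑ n ∈ s, b n * (n : ℂ) ^ ((t : ℂ) * I))) - ((T₂ - T₁ : ℝ) : ℂ) * ∑ n ∈ s, a n * b n
      = ∑ m ∈ s, ∑ n ∈ s.erase m, a m * b n *
          ∫ t in T₁..T₂, cexp (I * ((Real.log n - Real.log m : ℝ) : ℂ) * t) := by
  rw [integral_dirichletPoly_mul s hs, sub_eq_iff_eq_add', mul_sum, ← sum_add_distrib]
  refine sum_congr rfl fun m hm ↦ ?_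
  rw [← add_sum_erase s _ hm]
  simp only [sub_self, ofReal_zero, mul_zero, zero_mul, Complex.exp_zero,
    intervalIntegral.integral_const, real_smul, mul_one]
  ring

lemma norm_sum_sum_erase_integral_le (s : Finset ℕ) (hs : ∀ n ∈ s, n ≠ 0) (a b : ℕ → ℂ)
    (T₁ T₂ : ℝ) :
    ‖∑ m ∈ s, ∑ n ∈ s.erase m, a m * b n *
        ∫ t in T₁..T₂, cexp (I * ((Real.log n - Real.log m : ℝ) : ℂ) * t)‖
      ≤ ∑ m ∈ s, ∑ n ∈ s.erase m, 2 * ‖a m‖ * ‖b n‖ * |Real.log n - Real.log m|⁻¹ := by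
  have hpos : ∀ k ∈ s, (k : ℝ) ∈ Set.Ioi 0 := fun k hk ↦
    Set.mem_Ioi.2 <| Nat.cast_pos.2 (Nat.pos_of_ne_zero (hs k hk))
  refine (norm_sum_le _ _).trans (sum_le_sum fun m hm ↦
    (norm_sum_le _ _).trans (sum_le_sum fun n hn ↦ ?_))
  obtain ⟨hnm, hn⟩ := mem_erase.1 hn
  have hlog : Real.log n - Real.log m ≠ 0 := sub_ne_zero.2 fun h ↦
    hnm (by exact_mod_cast Real.log_injOn_pos (hpos n hn) (hpos m hm) h)
  rw [norm_mul, norm_mul]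
  nlinarith [norm_integral_exp_I_mul_le T₁ T₂ hlog,
    mul_nonneg (norm_nonneg (a m)) (norm_nonneg (b n))]

theorem stmt_6 :
    ∃ C : ℝ, 0 < C ∧ ∀ (T N : ℝ), 0 < N → N ≤ T → ∀ a b : ℕ → ℂ,
      ‖(∫ t in T..(2 * T),
            (∑ m ∈ Finset.Icc 1 ⌊N⌋₊, a m * (m : ℂ) ^ (-((t : ℂ) * Complex.I))) *
            (∑ n ∈ Finset.Icc 1 ⌊N⌋₊, b n * (n : ℂ) ^ ((t : ℂ) * Complex.I)))
          - (T : ℂ) * ∑ n ∈ Finset.Icc 1 ⌊N⌋₊, a n * b n‖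
        ≤ C * (N * Real.log N * ∑ n ∈ Finset.Icc 1 ⌊N⌋₊, (‖a n‖ ^ 2 + ‖b n‖ ^ 2)) := by
  refine ⟨5, by norm_num, fun T N hN _ a b ↦ ?_⟩
  have hS : ∀ n ∈ Icc 1 ⌊N⌋₊, n ≠ 0 := fun n hn ↦ Nat.one_le_iff_ne_zero.1 (mem_Icc.1 hn).1
  have hmain := integral_dirichletPoly_mul_sub_eq (Icc 1 ⌊N⌋₊) hS a b T (2 * T)
  rw [show 2 * T - T = T by ring] at hmain
  rw [hmain]
  calc _ ≤ _ := norm_sum_sum_erase_integral_le _ hS a b _ _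
    _ ≤ 5 * (N * Real.log N) * ∑ n ∈ Icc 1 ⌊N⌋₊, (‖a n‖ ^ 2 + ‖b n‖ ^ 2) :=
        sum_sum_erase_mul_le_of_symm _ (fun _ _ ↦ by positivity) (fun m n ↦ by rw [abs_sub_comm])
          (fun m hm ↦ sum_erase_inv_abs_log_sub_le hm (Nat.floor_le hN.le)) _ _
    _ = 5 * (N * Real.log N * ∑ n ∈ Icc 1 ⌊N⌋₊, (‖a n‖ ^ 2 + ‖b n‖ ^ 2)) := by ring
end
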